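/- arXiv:2304.07735 — 5 statements merged into one kernel-verified Lean document; each statement's English description precedes it below -/
import Mathlib

section
/- Let N denote row-wise normalization of p×d real matrices: N(X)ᵢⱼ = (Xᵢⱼ − μᵢ)/√(σᵢ² + ε), where μᵢ = (1/d) Σⱼ Xᵢⱼ is the mean of row i, σᵢ² = (1/d) Σⱼ (Xᵢⱼ − μᵢ)² is the variance of row i, and ε > 0. Define LayerNorm with elementwise affine parameters γ, b ∈ ℝᵈ by LN(X)ᵢⱼ = N(X)ᵢⱼ · γⱼ + bⱼ. For a p×p permutation matrix P_R and a d×d permutation matrix P_C, define LN_(P) to be LayerNorm with parameters γ_(P) = γ P_Cᵀ and b_(P) = b P_Cᵀ. Then LN_(P)(P_R X P_Cᵀ) = P_R LN(X) P_Cᵀ. -/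
open Matrix

/-- LayerNorm on `p × d` real matrices: each row is normalized to zero mean and
unit variance (with stabilizer `ε` inside the square root), followed by the
per-column affine parameters `γ` and `b`. -/
noncomputable def layerNorm {p d : ℕ} (ε : ℝ) (γ b : Fin d → ℝ)
    (X : Matrix (Fin p) (Fin d) ℝ) : Matrix (Fin p) (Fin d) ℝ :=
  Matrix.of fun i j =>
    (X i j - (∑ k, X i k) / d) /
        Real.sqrt ((∑ k, (X i k - (∑ l, X i l) / d) ^ 2) / d + ε) * γ j + b j

/-- LayerNorm is permutation equivalent: with `γ_(P) = γ P_Cᵀ` and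
`b_(P) = b P_Cᵀ`, `LN_(P)(P_R X P_Cᵀ) = P_R LN(X) P_Cᵀ`. -/
theorem layerNorm_perm_equivariant {p d : ℕ} (ε : ℝ) (hε : 0 < ε)
    (γ b : Fin d → ℝ) (σR : Equiv.Perm (Fin p)) (σC : Equiv.Perm (Fin d))
    (X : Matrix (Fin p) (Fin d) ℝ) :
    layerNorm ε (γ ᵥ* (σC.permMatrix ℝ)ᵀ) (b ᵥ* (σC.permMatrix ℝ)ᵀ)
        (σR.permMatrix ℝ * X * (σC.permMatrix ℝ)ᵀ) =
      σR.permMatrix ℝ * layerNorm ε γ b X * (σC.permMatrix ℝ)ᵀ := by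
  have hT : (σC.permMatrix ℝ)ᵀ = Equiv.Perm.permMatrix ℝ σC⁻¹ := by
    rw [Equiv.Perm.permMatrix, ← PEquiv.toMatrix_symm, ← Equiv.toPEquiv_symm]; rfl
  have hv : ∀ v : Fin d → ℝ, v ᵥ* Equiv.Perm.permMatrix ℝ (Equiv.symm σC) = fun j => v (σC j) := by
    intro v
    funext j
    simp [Matrix.vecMul, dotProduct, PEquiv.toMatrix_apply, Equiv.toPEquiv_apply,
      Equiv.Perm.inv_def, Equiv.symm_apply_eq, Finset.sum_ite_eq]
  rw [hT]
  simp only [PEquiv.toMatrix_toPEquiv_mul, PEquiv.mul_toMatrix_toPEquiv, hv,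
    Equiv.Perm.inv_def, Equiv.symm_symm]
  ext i j
  simp only [layerNorm, submatrix_apply, of_apply, id_eq]
  rw [Fintype.sum_equiv σC (fun k => X (σR i) (σC k)) (fun k => X (σR i) k) (fun k => rfl),
    Fintype.sum_equiv σC _ (fun k => (X (σR i) k - (∑ l, X (σR i) l) / d) ^ 2) (fun k => rfl)]
end

section
/- Let Attention(Q, K, V) = Softmax(Q Kᵀ / √d) V for p×d real matrices Q, K, V, where d > 0 and Softmax is the row-wise softmax. For any p×p permutation matrix P_R and d×d permutation matrix P_C, Attention(P_R Q P_Cᵀ, P_R K P_Cᵀ, P_R V P_Cᵀ) = P_R Attention(Q, K, V) P_Cᵀ. -/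
open Matrix

/-- Row-wise softmax of a real matrix. -/
noncomputable def softmax {p q : ℕ} (A : Matrix (Fin p) (Fin q) ℝ) :
    Matrix (Fin p) (Fin q) ℝ :=
  Matrix.of fun i j => Real.exp (A i j) / ∑ k, Real.exp (A i k)

/-- Scaled dot-product attention `Attention(Q,K,V) = Softmax(Q Kᵀ/√d) V`. -/
noncomputable def attention {p d : ℕ} (Q K V : Matrix (Fin p) (Fin d) ℝ) :
    Matrix (Fin p) (Fin d) ℝ :=
  softmax ((Real.sqrt d)⁻¹ • (Q * Kᵀ)) * V

lemma permMatrix_transpose {n : ℕ} (σ : Equiv.Perm (Fin n)) :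
    (σ.permMatrix ℝ)ᵀ = (σ⁻¹).permMatrix ℝ := by
  simp [Equiv.Perm.permMatrix, ← PEquiv.toMatrix_symm, ← Equiv.toPEquiv_symm]
  rfl

lemma permMatrix_T_mul {n : ℕ} (σ : Equiv.Perm (Fin n)) :
    (σ.permMatrix ℝ)ᵀ * σ.permMatrix ℝ = 1 := by
  rw [permMatrix_transpose, Equiv.Perm.permMatrix, Equiv.Perm.permMatrix,
    ← PEquiv.toMatrix_trans, ← Equiv.toPEquiv_trans]
  have : σ⁻¹.trans σ = Equiv.refl (Fin n) := by ext x; simp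
  rw [this, Equiv.toPEquiv_refl, PEquiv.toMatrix_refl]

lemma softmax_perm {p : ℕ} (σ : Equiv.Perm (Fin p)) (A : Matrix (Fin p) (Fin p) ℝ) :
    softmax (σ.permMatrix ℝ * A * (σ.permMatrix ℝ)ᵀ) =
      σ.permMatrix ℝ * softmax A * (σ.permMatrix ℝ)ᵀ := by
  rw [permMatrix_transpose, Equiv.Perm.permMatrix, Equiv.Perm.permMatrix,
    PEquiv.toMatrix_toPEquiv_mul, PEquiv.mul_toMatrix_toPEquiv,
    PEquiv.toMatrix_toPEquiv_mul, PEquiv.mul_toMatrix_toPEquiv]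
  ext i j
  simp only [softmax, submatrix_apply, of_apply, id_eq, Equiv.symm_symm, Equiv.Perm.inv_def]
  congr 1
  exact Equiv.sum_comp σ fun k => Real.exp (A (σ i) k)

/-- Attention is permutation equivalent:
`Attention(P_R Q P_Cᵀ, P_R K P_Cᵀ, P_R V P_Cᵀ) = P_R Attention(Q,K,V) P_Cᵀ`. -/
theorem attention_perm_equivariant {p d : ℕ} (hd : 0 < d)
    (σR : Equiv.Perm (Fin p)) (σC : Equiv.Perm (Fin d))
    (Q K V : Matrix (Fin p) (Fin d) ℝ) :
    attention (σR.permMatrix ℝ * Q * (σC.permMatrix ℝ)ᵀ)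
        (σR.permMatrix ℝ * K * (σC.permMatrix ℝ)ᵀ)
        (σR.permMatrix ℝ * V * (σC.permMatrix ℝ)ᵀ) =
      σR.permMatrix ℝ * attention Q K V * (σC.permMatrix ℝ)ᵀ := by
  have hC : ∀ (X : Matrix (Fin d) (Fin p) ℝ),
      (σC.permMatrix ℝ)ᵀ * (σC.permMatrix ℝ * X) = X := fun X => by
    rw [← Matrix.mul_assoc, permMatrix_T_mul, Matrix.one_mul]
  have hR : ∀ (X : Matrix (Fin p) (Fin d) ℝ),
      (σR.permMatrix ℝ)ᵀ * (σR.permMatrix ℝ * X) = X := fun X => by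
    rw [← Matrix.mul_assoc, permMatrix_T_mul, Matrix.one_mul]
  unfold attention
  have h1 : (σR.permMatrix ℝ * Q * (σC.permMatrix ℝ)ᵀ) *
      (σR.permMatrix ℝ * K * (σC.permMatrix ℝ)ᵀ)ᵀ =
      σR.permMatrix ℝ * (Q * Kᵀ) * (σR.permMatrix ℝ)ᵀ := by
    simp only [transpose_mul, transpose_transpose, Matrix.mul_assoc, hC]
  have h2 : (Real.sqrt d)⁻¹ • (σR.permMatrix ℝ * (Q * Kᵀ) * (σR.permMatrix ℝ)ᵀ) =
      σR.permMatrix ℝ * ((Real.sqrt d)⁻¹ • (Q * Kᵀ)) * (σR.permMatrix ℝ)ᵀ := by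
    rw [Matrix.mul_smul, Matrix.smul_mul]
  rw [h1, h2, softmax_perm]
  simp only [Matrix.mul_assoc, hR]
end

section
/- Define the Transformer encoder block Enc(Z) = MLP(Attn(Z)) on p×d real matrices Z, where Attn(Z) = Softmax((Z W_Qᵀ)(Z W_Kᵀ)ᵀ/√d)(Z W_Vᵀ) with row-wise softmax and d > 0, MLP(A) = a(A W₁ᵀ) W₂ᵀ with elementwise activation a : ℝ → ℝ, and W_Q, W_K, W_V, W₁, W₂ are d×d real matrices. Then for any p×p permutation matrix P_R, Enc(P_R Z) = P_R Enc(Z): the Transformer encoder block is row-permutation equivariant. -/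
open Matrix

/-- Self-attention layer: `Attn(Z) = Softmax((Z W_Qᵀ)(Z W_Kᵀ)ᵀ/√d)(Z W_Vᵀ)`. -/
noncomputable def selfAttn {p d : ℕ} (WQ WK WV : Matrix (Fin d) (Fin d) ℝ)
    (Z : Matrix (Fin p) (Fin d) ℝ) : Matrix (Fin p) (Fin d) ℝ :=
  softmax ((Real.sqrt d)⁻¹ • ((Z * WQᵀ) * (Z * WKᵀ)ᵀ)) * (Z * WVᵀ)

/-- Feed-forward (MLP) layer `MLP(A) = a(A W₁ᵀ) W₂ᵀ`. -/
def mlp {p d : ℕ} (a : ℝ → ℝ) (W₁ W₂ : Matrix (Fin d) (Fin d) ℝ)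
    (A : Matrix (Fin p) (Fin d) ℝ) : Matrix (Fin p) (Fin d) ℝ :=
  (A * W₁ᵀ).map a * W₂ᵀ

/-- Transformer encoder block `Enc(Z) = MLP(Attn(Z))`. -/
noncomputable def enc {p d : ℕ} (a : ℝ → ℝ)
    (WQ WK WV W₁ W₂ : Matrix (Fin d) (Fin d) ℝ)
    (Z : Matrix (Fin p) (Fin d) ℝ) : Matrix (Fin p) (Fin d) ℝ :=
  mlp a W₁ W₂ (selfAttn WQ WK WV Z)

lemma submatrix_row_mul {p q r : ℕ} (σ : Equiv.Perm (Fin p))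
    (A : Matrix (Fin p) (Fin q) ℝ) (B : Matrix (Fin q) (Fin r) ℝ) :
    A.submatrix σ id * B = (A * B).submatrix σ id := by
  ext i j; simp [Matrix.mul_apply]

lemma softmax_submatrix_row {p q : ℕ} (σ : Equiv.Perm (Fin p))
    (A : Matrix (Fin p) (Fin q) ℝ) :
    softmax (A.submatrix σ id) = (softmax A).submatrix σ id := by
  ext i j; simp [softmax]

/-- The Transformer encoder block is row-permutation equivariant:
`Enc(P_R Z) = P_R Enc(Z)`. -/
theorem enc_row_perm_equivariant {p d : ℕ} (hd : 0 < d) (a : ℝ → ℝ)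
    (WQ WK WV W₁ W₂ : Matrix (Fin d) (Fin d) ℝ)
    (σR : Equiv.Perm (Fin p)) (Z : Matrix (Fin p) (Fin d) ℝ) :
    enc a WQ WK WV W₁ W₂ (σR.permMatrix ℝ * Z) =
      σR.permMatrix ℝ * enc a WQ WK WV W₁ W₂ Z := by
  rw [Equiv.Perm.permMatrix, PEquiv.toMatrix_toPEquiv_mul, PEquiv.toMatrix_toPEquiv_mul]
  unfold enc mlp selfAttn
  set Zs := Z.submatrix σR id with hZs
  have hA : ((Real.sqrt d)⁻¹ • ((Zs * WQᵀ) * (Zs * WKᵀ)ᵀ))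
      = ((Real.sqrt d)⁻¹ • ((Z * WQᵀ) * (Z * WKᵀ)ᵀ)).submatrix σR σR := by
    ext i j
    simp [hZs, Matrix.mul_apply, Matrix.submatrix_apply, Finset.mul_sum, Finset.sum_mul]
  rw [hA]
  have hsm : softmax (((Real.sqrt d)⁻¹ • ((Z * WQᵀ) * (Z * WKᵀ)ᵀ)).submatrix σR σR)
      = (softmax ((Real.sqrt d)⁻¹ • ((Z * WQᵀ) * (Z * WKᵀ)ᵀ))).submatrix σR σR := by
    ext i j
    simp only [softmax, Matrix.of_apply, Matrix.submatrix_apply]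
    rw [Equiv.sum_comp σR (fun k => Real.exp (((Real.sqrt d)⁻¹ • ((Z * WQᵀ) * (Z * WKᵀ)ᵀ)) (σR i) k))]
  rw [hsm]
  set S := softmax ((Real.sqrt d)⁻¹ • ((Z * WQᵀ) * (Z * WKᵀ)ᵀ)) with hS
  have h2 : S.submatrix σR σR * (Zs * WVᵀ) = (S * (Z * WVᵀ)).submatrix σR id := by
    ext i j
    simp only [Matrix.mul_apply, Matrix.submatrix_apply, hZs, id, Finset.sum_mul, Finset.mul_sum]
    exact Equiv.sum_comp σR fun k => ∑ m, S (σR i) k * (Z k m * WVᵀ m j)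
  rw [h2]
  have h3 : ((S * (Z * WVᵀ)).submatrix σR id * W₁ᵀ).map a
      = ((S * (Z * WVᵀ) * W₁ᵀ).map a).submatrix σR id := by
    ext i j
    simp [Matrix.mul_apply, Matrix.submatrix_apply]
  rw [h3]
  ext i j
  simp [Matrix.mul_apply, Matrix.submatrix_apply]
end

section
/- Let Q, K be p×d real matrices, d > 0, P_R a p×p permutation matrix and P_C a d×d permutation matrix, and let S = Softmax(Q Kᵀ/√d) with row-wise softmax. Then the softmax output of the shuffled inputs satisfies Softmax((P_R Q P_Cᵀ)(P_R K P_Cᵀ)ᵀ/√d) = P_R S P_Rᵀ: under row-column shuffling, the attention score matrix is conjugated by the row permutation only. -/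
open Matrix

lemma softmax_submatrix {p : ℕ} (A : Matrix (Fin p) (Fin p) ℝ) (σ : Equiv.Perm (Fin p)) :
    softmax (A.submatrix σ σ) = (softmax A).submatrix σ σ := by
  ext i j
  simp only [softmax, Matrix.of_apply, Matrix.submatrix_apply]
  congr 1
  exact Fintype.sum_equiv σ _ _ fun k => rfl

lemma perm_conj {p q : ℕ} (A : Matrix (Fin p) (Fin q) ℝ)
    (σ : Equiv.Perm (Fin p)) (τ : Equiv.Perm (Fin q)) :
    σ.permMatrix ℝ * A * (τ.permMatrix ℝ)ᵀ = A.submatrix σ τ := by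
  have hτ : (τ.permMatrix ℝ)ᵀ = τ.symm.toPEquiv.toMatrix := by
    rw [← PEquiv.toMatrix_symm, Equiv.toPEquiv_symm]
  rw [hτ, PEquiv.mul_toMatrix_toPEquiv, PEquiv.toMatrix_toPEquiv_mul]
  simp [Matrix.submatrix_submatrix]

/-- Under row-column shuffling, the attention score matrix
`S = Softmax(Q Kᵀ/√d)` is conjugated by the row permutation only:
`Softmax((P_R Q P_Cᵀ)(P_R K P_Cᵀ)ᵀ/√d) = P_R S P_Rᵀ`. -/
theorem score_matrix_conjugation {p d : ℕ} (hd : 0 < d)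
    (σR : Equiv.Perm (Fin p)) (σC : Equiv.Perm (Fin d))
    (Q K : Matrix (Fin p) (Fin d) ℝ) :
    softmax ((Real.sqrt d)⁻¹ •
        ((σR.permMatrix ℝ * Q * (σC.permMatrix ℝ)ᵀ) *
          (σR.permMatrix ℝ * K * (σC.permMatrix ℝ)ᵀ)ᵀ)) =
      σR.permMatrix ℝ * softmax ((Real.sqrt d)⁻¹ • (Q * Kᵀ)) *
        (σR.permMatrix ℝ)ᵀ := by
  rw [perm_conj Q σR σC, perm_conj K σR σC,
    perm_conj (softmax ((Real.sqrt d)⁻¹ • (Q * Kᵀ))) σR σR]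
  have hprod : (Q.submatrix σR σC) * (K.submatrix σR σC)ᵀ = (Q * Kᵀ).submatrix σR σR := by
    ext i j
    simp only [Matrix.mul_apply, Matrix.transpose_apply, Matrix.submatrix_apply]
    exact Fintype.sum_equiv σC _ _ fun k => rfl
  rw [hprod, show (Real.sqrt d)⁻¹ • (Q * Kᵀ).submatrix σR σR = ((Real.sqrt d)⁻¹ • (Q * Kᵀ)).submatrix σR σR from rfl, softmax_submatrix]
end

section
/- The gradient of the query matrix is permutation equivalent: let S, G_S be p×p real matrices (S the attention score matrix and G_S = ∂l/∂S), K a p×d real matrix, d > 0, P_R a p×p permutation matrix and P_C a d×d permutation matrix, and let diag(M) denote the diagonal matrix with the diagonal of M. Then (1/√d) · ((diag(P_R S P_Rᵀ) − (P_R S P_Rᵀ)ᵀ (P_R S P_Rᵀ))ᵀ (P_R G_S P_Rᵀ)) (P_R K P_Cᵀ) = P_R [(1/√d) · ((diag(S) − Sᵀ S)ᵀ G_S) K] P_Cᵀ, i.e., ∂l/∂Q_(P) = P_R (∂l/∂Q) P_Cᵀ where ∂l/∂Q = (1/√d)((diag(S) − Sᵀ S)ᵀ (∂l/∂S)) K.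 -/
open Matrix

/-- The gradient of the query matrix is permutation equivalent:
`(1/√d)((diag(P_R S P_Rᵀ) − (P_R S P_Rᵀ)ᵀ(P_R S P_Rᵀ))ᵀ (P_R G_S P_Rᵀ))(P_R K P_Cᵀ)
  = P_R [(1/√d)((diag(S) − Sᵀ S)ᵀ G_S) K] P_Cᵀ`. -/
theorem query_grad_perm_equivalent {p d : ℕ} (hd : 0 < d)
    (σR : Equiv.Perm (Fin p)) (σC : Equiv.Perm (Fin d))
    (S GS : Matrix (Fin p) (Fin p) ℝ) (K : Matrix (Fin p) (Fin d) ℝ) :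
    (Real.sqrt d)⁻¹ •
        (((Matrix.diagonal (fun i =>
              (σR.permMatrix ℝ * S * (σR.permMatrix ℝ)ᵀ) i i) -
            (σR.permMatrix ℝ * S * (σR.permMatrix ℝ)ᵀ)ᵀ *
              (σR.permMatrix ℝ * S * (σR.permMatrix ℝ)ᵀ))ᵀ *
          (σR.permMatrix ℝ * GS * (σR.permMatrix ℝ)ᵀ)) *
          (σR.permMatrix ℝ * K * (σC.permMatrix ℝ)ᵀ)) =
      σR.permMatrix ℝ *
        ((Real.sqrt d)⁻¹ •
          (((Matrix.diagonal (fun i => S i i) - Sᵀ * S)ᵀ * GS) * K)) *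
        (σC.permMatrix ℝ)ᵀ := by
  set P := σR.permMatrix ℝ with hPdef
  set Q := σC.permMatrix ℝ with hQdef
  have h1 : Pᵀ * P = 1 := by
    simp [hPdef, Equiv.Perm.permMatrix, ← PEquiv.toMatrix_symm, ← PEquiv.toMatrix_trans,
      ← Equiv.toPEquiv_symm, ← Equiv.toPEquiv_trans]
  have hP1 : ∀ {m : Type} [Fintype m] (X : Matrix (Fin p) m ℝ), Pᵀ * (P * X) = X := by
    intro m _ X
    rw [← Matrix.mul_assoc, h1, Matrix.one_mul]
  have hdiag : Matrix.diagonal (fun i => (P * S * Pᵀ) i i)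
      = P * Matrix.diagonal (fun i => S i i) * Pᵀ := by
    have h : ∀ (M : Matrix (Fin p) (Fin p) ℝ), P * M * Pᵀ = M.submatrix σR σR := by
      intro M
      rw [hPdef, Equiv.Perm.permMatrix, PEquiv.toMatrix_toPEquiv_mul, ← PEquiv.toMatrix_symm,
        ← Equiv.toPEquiv_symm, PEquiv.mul_toMatrix_toPEquiv]
      simp
    rw [h, h, Matrix.submatrix_diagonal _ _ σR.injective]
    ext i j
    by_cases hij : i = j <;> simp [Matrix.diagonal, hij]
  rw [hdiag]
  simp only [transpose_sub, transpose_mul, transpose_transpose, diagonal_transpose,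
    Matrix.sub_mul, Matrix.mul_sub, Matrix.mul_smul, Matrix.smul_mul,
    Matrix.mul_assoc, hP1]
end
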